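/- arXiv:1702.02047 — 2 statements merged into one kernel-verified Lean document; each statement's English description precedes it below -/
import Mathlib

section
/- Let cl be a closure operator on the subsets of a universe X (i.e., A ⊆ B implies cl(A) ⊆ cl(B), and A ⊆ cl(A) = cl(cl(A)) for all A, B ⊆ X), let m ≥ 1, and let 𝓒[m] be the concept class of all closed sets C ⊆ X with s_cl(C) ≤ m, where s_cl(C) is the least cardinality of a set S ⊆ X with cl(S) = C. Then PBTD⁺(𝓒[m]) ≤ PBTD⁺(𝓒[m], ⊃) ≤ m; moreover, if there exists a closed set C with s_cl(C) = m (i.e., 𝓒[m] \ 𝓒[m−1] ≠ ∅), then PBTD⁺(𝓒[m]) = m. -/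
/-!
Ordering concepts by inclusion, a closed set `C = cl S` is taught by `S` itself: every closed
`L' ⊇ S` contains `cl S = C`, so every concept consistent with `S` other than `C` is a proper
superset of `C`, hence less preferred.  For the lower bound, suppose some order achieves less than
`m`, and let `C` be closed with `s_cl(C) = m`, taught by some `S` with `|S| < m`.  Then `C' := cl S`
is a concept different from `C` with `S ⊆ C' ⊆ C`, so `C` must be preferred over `C'`; but any
positive teaching set of `C'` lies in `C' ⊆ C`, so `C'` must also be preferred over `C`.
-/

namespace PBT

variable {X : Type*}

/-- A set `L ⊆ X` is consistent with a set `T` of labeled examples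
(label `true` = “+”, label `false` = “−”). -/
def Consistent (L : Set X) (T : Set (X × Bool)) : Prop :=
  ∀ p ∈ T, (p.2 = true → p.1 ∈ L) ∧ (p.2 = false → p.1 ∉ L)

/-- `T` is a teaching set for `L` w.r.t. the concept class `𝓛`:
`L` is the only concept in `𝓛` that is consistent with `T`. -/
def IsTeachingSet (𝓛 : Set (Set X)) (L : Set X) (T : Set (X × Bool)) : Prop :=
  Consistent L T ∧ ∀ L' ∈ 𝓛, Consistent L' T → L' = L

/-- `TD L 𝓛`: least size of a finite teaching set for `L` w.r.t. `𝓛` (`⊤` if none exists). -/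
noncomputable def TD (L : Set X) (𝓛 : Set (Set X)) : ℕ∞ :=
  sInf {n : ℕ∞ | ∃ T : Finset (X × Bool), IsTeachingSet 𝓛 L ↑T ∧ n = T.card}

/-- A positive teaching set, identified with its set of (positively labeled) points. -/
def IsPosTeachingSet (𝓛 : Set (Set X)) (L : Set X) (S : Set X) : Prop :=
  S ⊆ L ∧ ∀ L' ∈ 𝓛, S ⊆ L' → L' = L

/-- least size of a finite positive teaching set for `L` w.r.t. `𝓛` (`⊤` if none exists). -/
noncomputable def TDpos (L : Set X) (𝓛 : Set (Set X)) : ℕ∞ :=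
  sInf {n : ℕ∞ | ∃ S : Finset X, IsPosTeachingSet 𝓛 L ↑S ∧ n = S.card}

/-- A strict partial order (preference relation) on concepts:
`pr L' L` means `L` is strictly preferred over `L'`. -/
def StrictPO (pr : Set X → Set X → Prop) : Prop :=
  (∀ A, ¬ pr A A) ∧ ∀ A B C : Set X, pr A B → pr B C → pr A C

/-- `PBTDord 𝓛 pr = sup_{L ∈ 𝓛} TD(L, 𝓛 \ {L' ∈ 𝓛 | pr L' L})`. -/
noncomputable def PBTDord (𝓛 : Set (Set X)) (pr : Set X → Set X → Prop) : ℕ∞ :=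
  ⨆ L ∈ 𝓛, TD L {L' ∈ 𝓛 | ¬ pr L' L}

/-- preference-based teaching dimension of `𝓛`. -/
noncomputable def PBTD (𝓛 : Set (Set X)) : ℕ∞ :=
  sInf {v : ℕ∞ | ∃ pr, StrictPO pr ∧ v = PBTDord 𝓛 pr}

/-- `PBTDposOrd 𝓛 pr = sup_{L ∈ 𝓛} TD⁺(L, 𝓛 \ {L' ∈ 𝓛 | pr L' L})`. -/
noncomputable def PBTDposOrd (𝓛 : Set (Set X)) (pr : Set X → Set X → Prop) : ℕ∞ :=
  ⨆ L ∈ 𝓛, TDpos L {L' ∈ 𝓛 | ¬ pr L' L}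

/-- positive preference-based teaching dimension of `𝓛`. -/
noncomputable def PBTDpos (𝓛 : Set (Set X)) : ℕ∞ :=
  sInf {v : ℕ∞ | ∃ pr, StrictPO pr ∧ v = PBTDposOrd 𝓛 pr}


/-- `s_cl(C)`: least cardinality of a (finite) set `S` with `cl S = C` (`⊤` if none exists). -/
noncomputable def scl (cl : Set X → Set X) (C : Set X) : ℕ∞ :=
  sInf {n : ℕ∞ | ∃ S : Finset X, cl ↑S = C ∧ n = S.card}

/-- `𝓒[m]`: the class of all closed sets `C` with `s_cl(C) ≤ m`. -/
def closedClass (cl : Set X → Set X) (m : ℕ) : Set (Set X) :=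
  {C | cl C = C ∧ scl cl C ≤ (m : ℕ∞)}

lemma strictPO_ssuperset : StrictPO (fun L' L : Set X => L ⊂ L') :=
  ⟨fun _ h => h.2 h.1, fun _ _ _ h₁ h₂ => h₂.trans h₁⟩

lemma PBTDpos_le_PBTDposOrd {𝓛 : Set (Set X)} {pr : Set X → Set X → Prop} (hpr : StrictPO pr) :
    PBTDpos 𝓛 ≤ PBTDposOrd 𝓛 pr :=
  sInf_le ⟨pr, hpr, rfl⟩

lemma TDpos_le_PBTDposOrd {𝓛 : Set (Set X)} {pr : Set X → Set X → Prop} {L : Set X}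
    (hL : L ∈ 𝓛) : TDpos L {L' ∈ 𝓛 | ¬ pr L' L} ≤ PBTDposOrd 𝓛 pr :=
  le_iSup₂ (f := fun L (_ : L ∈ 𝓛) => TDpos L {L' ∈ 𝓛 | ¬ pr L' L}) L hL

lemma TDpos_le_card {𝓛 : Set (Set X)} {L : Set X} {S : Finset X}
    (hS : IsPosTeachingSet 𝓛 L S) : TDpos L 𝓛 ≤ S.card :=
  sInf_le ⟨S, hS, rfl⟩

lemma exists_isPosTeachingSet_of_TDpos_lt {𝓛 : Set (Set X)} {L : Set X} {n : ℕ∞}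
    (h : TDpos L 𝓛 < n) : ∃ S : Finset X, IsPosTeachingSet 𝓛 L S ∧ (S.card : ℕ∞) < n := by
  obtain ⟨_, ⟨S, hS, rfl⟩, hn⟩ := sInf_lt_iff.mp h
  exact ⟨S, hS, hn⟩

lemma scl_le_card (cl : Set X → Set X) (S : Finset X) : scl cl (cl S) ≤ S.card :=
  sInf_le ⟨S, rfl, rfl⟩

lemma exists_finset_of_scl_le {cl : Set X → Set X} {C : Set X} {n : ℕ}
    (h : scl cl C ≤ n) : ∃ S : Finset X, cl S = C ∧ S.card ≤ n := by
  have h' : scl cl C < (n + 1 : ℕ) := h.trans_lt (ENat.natCast_lt_natCast.mpr n.lt_succ_self)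
  obtain ⟨_, ⟨S, hS, rfl⟩, hn⟩ := sInf_lt_iff.mp h'
  exact ⟨S, hS, Nat.lt_succ_iff.mp (by exact_mod_cast hn)⟩

lemma IsPosTeachingSet.pr_of_subset_of_ne {𝓛 : Set (Set X)} {pr : Set X → Set X → Prop}
    {L L' S : Set X} (hS : IsPosTeachingSet {L'' ∈ 𝓛 | ¬ pr L'' L} L S) (hL' : L' ∈ 𝓛)
    (hSL' : S ⊆ L') (hne : L' ≠ L) : pr L' L :=
  by_contra fun hpr => hne (hS.2 L' ⟨hL', hpr⟩ hSL')

lemma isPosTeachingSet_of_cl_eq {cl : Set X → Set X} (hmono : ∀ A B : Set X, A ⊆ B → cl A ⊆ cl B)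
    (hext : ∀ A : Set X, A ⊆ cl A) {𝓛 : Set (Set X)} (h𝓛 : ∀ L ∈ 𝓛, cl L = L) {S L : Set X}
    (hS : cl S = L) : IsPosTeachingSet {L' ∈ 𝓛 | ¬ L ⊂ L'} L S := by
  refine ⟨hS ▸ hext S, fun L' ⟨hL', hnss⟩ hSL' => ?_⟩
  have hLL' : L ⊆ L' := hS ▸ h𝓛 L' hL' ▸ hmono S L' hSL'
  exact (eq_or_ssubset_of_subset hLL').resolve_right hnss |>.symm

lemma PBTDposOrd_closedClass_ssuperset_le {cl : Set X → Set X}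
    (hmono : ∀ A B : Set X, A ⊆ B → cl A ⊆ cl B) (hext : ∀ A : Set X, A ⊆ cl A) (m : ℕ) :
    PBTDposOrd (closedClass cl m) (fun L' L => L ⊂ L') ≤ m := by
  refine iSup₂_le fun L ⟨_, hscl⟩ => ?_
  obtain ⟨S, hS, hcard⟩ := exists_finset_of_scl_le hscl
  calc TDpos L {L' ∈ closedClass cl m | ¬ L ⊂ L'}
      ≤ S.card := TDpos_le_card (isPosTeachingSet_of_cl_eq hmono hext (fun _ h => h.1) hS)
    _ ≤ m := by exact_mod_cast hcard

lemma le_PBTDposOrd_closedClass {cl : Set X → Set X}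
    (hmono : ∀ A B : Set X, A ⊆ B → cl A ⊆ cl B) (hext : ∀ A : Set X, A ⊆ cl A)
    (hidem : ∀ A : Set X, cl (cl A) = cl A) {m : ℕ} {C : Set X} (hC : cl C = C)
    (hsclC : scl cl C = m) {pr : Set X → Set X → Prop} (hpr : StrictPO pr) :
    (m : ℕ∞) ≤ PBTDposOrd (closedClass cl m) pr := by
  by_contra! hlt
  have hCmem : C ∈ closedClass cl m := ⟨hC, hsclC.le⟩
  obtain ⟨S, hS, hcard⟩ :=
    exists_isPosTeachingSet_of_TDpos_lt ((TDpos_le_PBTDposOrd hCmem).trans_lt hlt)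
  set C' := cl (S : Set X)
  have hsclC' : scl cl C' < m := (scl_le_card cl S).trans_lt hcard
  have hC'mem : C' ∈ closedClass cl m := ⟨hidem _, hsclC'.le⟩
  have hne : C' ≠ C := fun h => (h ▸ hsclC').ne hsclC
  have hC'C : C' ⊆ C := hC ▸ hmono _ _ hS.1
  obtain ⟨S', hS', -⟩ :=
    exists_isPosTeachingSet_of_TDpos_lt ((TDpos_le_PBTDposOrd hC'mem).trans_lt hlt)
  have hprC'C : pr C' C := hS.pr_of_subset_of_ne hC'mem (hext _) hne
  have hprCC' : pr C C' := hS'.pr_of_subset_of_ne hCmem (hS'.1.trans hC'C) hne.symm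
  exact hpr.1 C (hpr.2 C C' C hprCC' hprC'C)

theorem pbtdpos_of_closure_operator_general {X : Type*} (cl : Set X → Set X)
    (hmono : ∀ A B : Set X, A ⊆ B → cl A ⊆ cl B)
    (hext : ∀ A : Set X, A ⊆ cl A)
    (hidem : ∀ A : Set X, cl (cl A) = cl A)
    (m : ℕ) :
    PBTDpos (closedClass cl m) ≤ PBTDposOrd (closedClass cl m) (fun L' L => L ⊂ L') ∧
    PBTDposOrd (closedClass cl m) (fun L' L => L ⊂ L') ≤ (m : ℕ∞) ∧
    ((∃ C : Set X, cl C = C ∧ scl cl C = (m : ℕ∞)) →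
      PBTDpos (closedClass cl m) = (m : ℕ∞)) := by
  have hle := PBTDpos_le_PBTDposOrd (𝓛 := closedClass cl m) (strictPO_ssuperset (X := X))
  have hub := PBTDposOrd_closedClass_ssuperset_le hmono hext m
  refine ⟨hle, hub, fun ⟨C, hC, hsclC⟩ => le_antisymm (hle.trans hub) ?_⟩
  exact le_sInf fun _ ⟨_, hpr, hv⟩ => hv ▸ le_PBTDposOrd_closedClass hmono hext hidem hC hsclC hpr

/-- For a closure operator `cl` and `m ≥ 1`:
`PBTD⁺(𝓒[m]) ≤ PBTD⁺(𝓒[m], ⊃) ≤ m`, with `PBTD⁺(𝓒[m]) = m` if some closed set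
has `s_cl(C) = m`.  (Here the preference `pr L' L ↔ L' ⊃ L` prefers proper subsets.) -/
theorem pbtdpos_of_closure_operator {X : Type*} (cl : Set X → Set X)
    (hmono : ∀ A B : Set X, A ⊆ B → cl A ⊆ cl B)
    (hext : ∀ A : Set X, A ⊆ cl A)
    (hidem : ∀ A : Set X, cl (cl A) = cl A)
    (m : ℕ) (hm : 1 ≤ m) :
    PBTDpos (closedClass cl m) ≤ PBTDposOrd (closedClass cl m) (fun L' L => L ⊂ L') ∧
    PBTDposOrd (closedClass cl m) (fun L' L => L ⊂ L') ≤ (m : ℕ∞) ∧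
    ((∃ C : Set X, cl C = C ∧ scl cl C = (m : ℕ∞)) →
      PBTDpos (closedClass cl m) = (m : ℕ∞)) :=
  pbtdpos_of_closure_operator_general cl hmono hext hidem m

end PBT
end

section
/- (Shift Lemma) Let 𝓛 be a concept class over the universe ℕ₀ such that 0 ∈ L for every L ∈ 𝓛, and let 𝓛′ = {c + L : c ∈ ℕ₀, L ∈ 𝓛} be its shift-extension, where c + L = {c + x : x ∈ L}. Then PBTD(𝓛) ≤ PBTD(𝓛′) ≤ 1 + PBTD(𝓛) and PBTD⁺(𝓛) ≤ PBTD⁺(𝓛′) ≤ 1 + PBTD⁺(𝓛). (The same statement holds with the nonnegative rationals or the nonnegative reals in place of ℕ₀.) -/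
namespace PBT

variable {X : Type*}

/-- The shift-extension `𝓛' = {c + L : c ∈ ℕ₀, L ∈ 𝓛}` of a class `𝓛` over `ℕ₀`. -/
def shiftExt (𝓛 : Set (Set ℕ)) : Set (Set ℕ) :=
  {S | ∃ c : ℕ, ∃ L ∈ 𝓛, S = (fun x => c + x) '' L}

/-!
The embedding `𝓛 ⊆ 𝓛'` gives the lower bounds, since enlarging a class can only enlarge its
teaching dimensions. For the upper bounds, order `𝓛'` lexicographically: first by the offset
`c = min (c + L)` (smaller offsets preferred), then by the given order on the unshifted concept `L`.
A teaching set for `L` shifted by `c`, plus the positive example `c`, teaches `c + L`: the example `c`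
excludes all `d + M` with `d > c`, the order excludes those with `d < c`, and for `d = c` the shifted
examples behave exactly like the original ones.
-/

lemma TD_mono {L : Set X} {𝓐 𝓑 : Set (Set X)} (h : 𝓐 ⊆ 𝓑) : TD L 𝓐 ≤ TD L 𝓑 := by
  apply sInf_le_sInf
  rintro n ⟨T, ⟨hcons, huniq⟩, rfl⟩
  exact ⟨T, ⟨hcons, fun L' hL' => huniq L' (h hL')⟩, rfl⟩

lemma TDpos_mono {L : Set X} {𝓐 𝓑 : Set (Set X)} (h : 𝓐 ⊆ 𝓑) : TDpos L 𝓐 ≤ TDpos L 𝓑 := by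
  apply sInf_le_sInf
  rintro n ⟨S, ⟨hsub, huniq⟩, rfl⟩
  exact ⟨S, ⟨hsub, fun L' hL' => huniq L' (h hL')⟩, rfl⟩

lemma PBTDord_mono {𝓛 𝓜 : Set (Set X)} (h : 𝓛 ⊆ 𝓜) (pr : Set X → Set X → Prop) :
    PBTDord 𝓛 pr ≤ PBTDord 𝓜 pr :=
  iSup₂_le fun L hL => (TD_mono (𝓑 := {L' ∈ 𝓜 | ¬ pr L' L}) fun _ hM => ⟨h hM.1, hM.2⟩).trans
    (le_iSup₂ (f := fun L' (_ : L' ∈ 𝓜) => TD L' {M ∈ 𝓜 | ¬ pr M L'}) L (h hL))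

lemma PBTDposOrd_mono {𝓛 𝓜 : Set (Set X)} (h : 𝓛 ⊆ 𝓜) (pr : Set X → Set X → Prop) :
    PBTDposOrd 𝓛 pr ≤ PBTDposOrd 𝓜 pr :=
  iSup₂_le fun L hL => (TDpos_mono (𝓑 := {L' ∈ 𝓜 | ¬ pr L' L}) fun _ hM => ⟨h hM.1, hM.2⟩).trans
    (le_iSup₂ (f := fun L' (_ : L' ∈ 𝓜) => TDpos L' {M ∈ 𝓜 | ¬ pr M L'}) L (h hL))

lemma PBTD_mono {𝓛 𝓜 : Set (Set X)} (h : 𝓛 ⊆ 𝓜) : PBTD 𝓛 ≤ PBTD 𝓜 := by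
  refine le_sInf ?_
  rintro _ ⟨pr, hpr, rfl⟩
  exact sInf_le_of_le ⟨pr, hpr, rfl⟩ (PBTDord_mono h pr)

lemma PBTDpos_mono {𝓛 𝓜 : Set (Set X)} (h : 𝓛 ⊆ 𝓜) : PBTDpos 𝓛 ≤ PBTDpos 𝓜 := by
  refine le_sInf ?_
  rintro _ ⟨pr, hpr, rfl⟩
  exact sInf_le_of_le ⟨pr, hpr, rfl⟩ (PBTDposOrd_mono h pr)

lemma subset_shiftExt (𝓛 : Set (Set ℕ)) : 𝓛 ⊆ shiftExt 𝓛 :=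
  fun L hL => ⟨0, L, hL, by simp⟩

lemma sInf_image_add {L : Set ℕ} (h0 : 0 ∈ L) (c : ℕ) : sInf ((c + ·) '' L) = c :=
  le_antisymm (Nat.sInf_le ⟨0, h0, rfl⟩)
    (le_csInf ⟨c, 0, h0, rfl⟩ (by rintro _ ⟨x, -, rfl⟩; exact Nat.le_add_right c x))

lemma image_sub_image_add (L : Set ℕ) (c : ℕ) : (· - c) '' ((c + ·) '' L) = L := by
  rw [← Set.image_comp]
  simp

def shiftOrder (pr : Set ℕ → Set ℕ → Prop) (A B : Set ℕ) : Prop :=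
  sInf A < sInf B ∨ (sInf A = sInf B ∧ pr ((· - sInf A) '' A) ((· - sInf B) '' B))

lemma StrictPO.shiftOrder {pr : Set ℕ → Set ℕ → Prop} (h : StrictPO pr) :
    StrictPO (shiftOrder pr) := by
  constructor
  · rintro A (hlt | ⟨-, hpr⟩)
    · exact lt_irrefl _ hlt
    · exact h.1 _ hpr
  · rintro A B C (hAB | ⟨eAB, pAB⟩) (hBC | ⟨eBC, pBC⟩)
    · exact Or.inl (hAB.trans hBC)
    · exact Or.inl (eBC ▸ hAB)
    · exact Or.inl (eAB ▸ hBC)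
    · exact Or.inr ⟨eAB.trans eBC, h.2 _ _ _ pAB pBC⟩

lemma shiftOrder_image_add_iff {pr : Set ℕ → Set ℕ → Prop} {M L : Set ℕ} (hM : 0 ∈ M)
    (hL : 0 ∈ L) (d c : ℕ) :
    shiftOrder pr ((d + ·) '' M) ((c + ·) '' L) ↔ d < c ∨ (d = c ∧ pr M L) := by
  simp only [shiftOrder, sInf_image_add hM, sInf_image_add hL, image_sub_image_add]

lemma eq_and_not_of_not_shiftOrder {pr : Set ℕ → Set ℕ → Prop} {M L : Set ℕ} (hM : 0 ∈ M)
    (hL : 0 ∈ L) {d c : ℕ} (hc : c ∈ (d + ·) '' M)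
    (h : ¬ shiftOrder pr ((d + ·) '' M) ((c + ·) '' L)) : d = c ∧ ¬ pr M L := by
  obtain ⟨x, -, rfl⟩ := hc
  beta_reduce at h ⊢
  rw [shiftOrder_image_add_iff hM hL, not_or, not_and] at h
  have hdx : d = d + x := by omega
  exact ⟨hdx, h.2 hdx⟩

lemma consistent_image_iff {Y : Type*} {f : X → Y} (hf : f.Injective) {M : Set X}
    {T : Set (X × Bool)} : Consistent (f '' M) (Prod.map f id '' T) ↔ Consistent M T := by
  simp only [Consistent, Set.forall_mem_image, Prod.map_fst, Prod.map_snd, id, hf.mem_set_image]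

variable {𝓛 : Set (Set ℕ)} {pr : Set ℕ → Set ℕ → Prop} {L : Set ℕ}

lemma IsTeachingSet.shift (h0 : ∀ M ∈ 𝓛, 0 ∈ M) (hL : L ∈ 𝓛) {T : Set (ℕ × Bool)}
    (hT : IsTeachingSet {M ∈ 𝓛 | ¬ pr M L} L T) (c : ℕ) :
    IsTeachingSet {A ∈ shiftExt 𝓛 | ¬ shiftOrder pr A ((c + ·) '' L)} ((c + ·) '' L)
      (insert (c, true) (Prod.map (c + ·) id '' T)) := by
  have hinj : (c + ·).Injective := add_right_injective c
  refine ⟨?_, ?_⟩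
  · refine Set.forall_mem_insert.2 ⟨⟨fun _ => ⟨0, h0 L hL, rfl⟩, nofun⟩, ?_⟩
    exact (consistent_image_iff hinj).2 hT.1
  · rintro _ ⟨⟨d, M, hM, rfl⟩, hnot⟩ hcons
    obtain ⟨rfl, hMpr⟩ := eq_and_not_of_not_shiftOrder (h0 M hM) (h0 L hL)
      ((hcons _ (Set.mem_insert _ _)).1 rfl) hnot
    have hconsM : Consistent M T :=
      (consistent_image_iff hinj).1 fun p hp => hcons p (Set.mem_insert_of_mem _ hp)
    rw [hT.2 M ⟨hM, hMpr⟩ hconsM]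

lemma IsPosTeachingSet.shift (h0 : ∀ M ∈ 𝓛, 0 ∈ M) (hL : L ∈ 𝓛) {S : Set ℕ}
    (hS : IsPosTeachingSet {M ∈ 𝓛 | ¬ pr M L} L S) (c : ℕ) :
    IsPosTeachingSet {A ∈ shiftExt 𝓛 | ¬ shiftOrder pr A ((c + ·) '' L)} ((c + ·) '' L)
      (insert c ((c + ·) '' S)) := by
  have hinj : (c + ·).Injective := add_right_injective c
  refine ⟨Set.insert_subset ⟨0, h0 L hL, rfl⟩ (Set.image_mono hS.1), ?_⟩
  rintro _ ⟨⟨d, M, hM, rfl⟩, hnot⟩ hsub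
  obtain ⟨rfl, hMpr⟩ :=
    eq_and_not_of_not_shiftOrder (h0 M hM) (h0 L hL) (hsub (Set.mem_insert _ _)) hnot
  have hsubM : S ⊆ M := (Set.image_subset_image_iff hinj).1 ((Set.subset_insert _ _).trans hsub)
  rw [hS.2 M ⟨hM, hMpr⟩ hsubM]

lemma sInf_le_one_add_sInf {s t : Set ℕ∞} (h : ∀ a ∈ s, ∃ b ∈ t, b ≤ 1 + a) :
    sInf t ≤ 1 + sInf s := by
  rcases s.eq_empty_or_nonempty with rfl | hs
  · simp
  · obtain ⟨b, hb, hle⟩ := h _ (csInf_mem hs)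
    exact (sInf_le hb).trans hle

lemma card_insert_image_le {α β : Type*} [DecidableEq β] (b : β) (f : α → β) (s : Finset α) :
    (insert b (s.image f)).card ≤ 1 + s.card := by
  have := (Finset.card_insert_le b (s.image f)).trans (Nat.add_le_add_right Finset.card_image_le 1)
  omega

lemma TD_shift_le (h0 : ∀ M ∈ 𝓛, 0 ∈ M) (hL : L ∈ 𝓛) (c : ℕ) :
    TD ((c + ·) '' L) {A ∈ shiftExt 𝓛 | ¬ shiftOrder pr A ((c + ·) '' L)}
      ≤ 1 + TD L {M ∈ 𝓛 | ¬ pr M L} := by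
  refine sInf_le_one_add_sInf ?_
  rintro _ ⟨T, hT, rfl⟩
  refine ⟨_, ⟨insert (c, true) (T.image (Prod.map (c + ·) id)), ?_, rfl⟩, ?_⟩
  · push_cast
    exact hT.shift h0 hL c
  · exact_mod_cast card_insert_image_le _ _ T

lemma TDpos_shift_le (h0 : ∀ M ∈ 𝓛, 0 ∈ M) (hL : L ∈ 𝓛) (c : ℕ) :
    TDpos ((c + ·) '' L) {A ∈ shiftExt 𝓛 | ¬ shiftOrder pr A ((c + ·) '' L)}
      ≤ 1 + TDpos L {M ∈ 𝓛 | ¬ pr M L} := by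
  refine sInf_le_one_add_sInf ?_
  rintro _ ⟨S, hS, rfl⟩
  refine ⟨_, ⟨insert c (S.image (c + ·)), ?_, rfl⟩, ?_⟩
  · push_cast
    exact hS.shift h0 hL c
  · exact_mod_cast card_insert_image_le _ _ S

lemma PBTDord_shiftExt_le (h0 : ∀ M ∈ 𝓛, 0 ∈ M) (pr : Set ℕ → Set ℕ → Prop) :
    PBTDord (shiftExt 𝓛) (shiftOrder pr) ≤ 1 + PBTDord 𝓛 pr := by
  refine iSup₂_le ?_
  rintro _ ⟨c, L, hL, rfl⟩
  refine (TD_shift_le h0 hL c).trans ?_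
  gcongr
  exact le_iSup₂ (f := fun L' (_ : L' ∈ 𝓛) => TD L' {M ∈ 𝓛 | ¬ pr M L'}) L hL

lemma PBTDposOrd_shiftExt_le (h0 : ∀ M ∈ 𝓛, 0 ∈ M) (pr : Set ℕ → Set ℕ → Prop) :
    PBTDposOrd (shiftExt 𝓛) (shiftOrder pr) ≤ 1 + PBTDposOrd 𝓛 pr := by
  refine iSup₂_le ?_
  rintro _ ⟨c, L, hL, rfl⟩
  refine (TDpos_shift_le h0 hL c).trans ?_
  gcongr
  exact le_iSup₂ (f := fun L' (_ : L' ∈ 𝓛) => TDpos L' {M ∈ 𝓛 | ¬ pr M L'}) L hL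

lemma PBTD_shiftExt_le (h0 : ∀ M ∈ 𝓛, 0 ∈ M) : PBTD (shiftExt 𝓛) ≤ 1 + PBTD 𝓛 := by
  refine sInf_le_one_add_sInf ?_
  rintro _ ⟨pr, hpr, rfl⟩
  exact ⟨_, ⟨_, hpr.shiftOrder, rfl⟩, PBTDord_shiftExt_le h0 pr⟩

lemma PBTDpos_shiftExt_le (h0 : ∀ M ∈ 𝓛, 0 ∈ M) : PBTDpos (shiftExt 𝓛) ≤ 1 + PBTDpos 𝓛 := by
  refine sInf_le_one_add_sInf ?_
  rintro _ ⟨pr, hpr, rfl⟩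
  exact ⟨_, ⟨_, hpr.shiftOrder, rfl⟩, PBTDposOrd_shiftExt_le h0 pr⟩

/-- Shift Lemma: if `0 ∈ L` for every `L ∈ 𝓛`, then
`PBTD(𝓛) ≤ PBTD(𝓛') ≤ 1 + PBTD(𝓛)` and `PBTD⁺(𝓛) ≤ PBTD⁺(𝓛') ≤ 1 + PBTD⁺(𝓛)`. -/
theorem shift_lemma (𝓛 : Set (Set ℕ)) (h0 : ∀ L ∈ 𝓛, 0 ∈ L) :
    PBTD 𝓛 ≤ PBTD (shiftExt 𝓛) ∧ PBTD (shiftExt 𝓛) ≤ 1 + PBTD 𝓛 ∧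
    PBTDpos 𝓛 ≤ PBTDpos (shiftExt 𝓛) ∧ PBTDpos (shiftExt 𝓛) ≤ 1 + PBTDpos 𝓛 :=
  ⟨PBTD_mono (subset_shiftExt 𝓛), PBTD_shiftExt_le h0,
    PBTDpos_mono (subset_shiftExt 𝓛), PBTDpos_shiftExt_le h0⟩

end PBT
end
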